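/- Let m ≥ 2 and γ > 0. Then the set of critical potentials {u > 0 : Ĥ(0; γ, u) is singular} equals {γ(m−1)/√(δ_k² − 1/4) : 1 ≤ k ≤ ⌊m/2⌋ − 1}, where δ_k = k if m is even and δ_k = k + 1/2 if m is odd. In particular this set has exactly ⌊m/2⌋ − 1 distinct elements; it is empty when m = 2 or m = 3, so in those cases Ĥ(0; γ, u) is invertible for every u > 0. -/

import Mathlib

open Matrix Complex

/-- Potential at layer `j` (1-indexed, `1 ≤ j ≤ m`): `u_j = (u/(m−1))·(j − (m+1)/2)`. -/
noncomputable def layerPot (m : ℕ) (u : ℝ) (j : ℕ) : ℝ :=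
  (u / ((m : ℝ) - 1)) * ((j : ℝ) - ((m : ℝ) + 1) / 2)

/-- The `2m×2m` bulk Hamiltonian symbol `Ĥ(𝐤; γ, u)`: block-tridiagonal, with `j`-th
diagonal `2×2` block `u_j I₂ + kx σ₁ + ky σ₂`, superdiagonal blocks `γA` and
subdiagonal blocks `γA*`, where `A = [[0,0],[1,0]]`. -/
noncomputable def Hbulk (m : ℕ) (γ u kx ky : ℝ) :
    Matrix (Fin (2 * m)) (Fin (2 * m)) ℂ :=
  Matrix.of fun i j =>
    if (i : ℕ) = (j : ℕ) then ((layerPot m u ((i : ℕ) / 2 + 1) : ℝ) : ℂ)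
    else if (i : ℕ) + 1 = (j : ℕ) then
      (if (i : ℕ) % 2 = 0 then ((kx : ℂ) - (ky : ℂ) * Complex.I) else ((γ : ℝ) : ℂ))
    else if (j : ℕ) + 1 = (i : ℕ) then
      (if (j : ℕ) % 2 = 0 then ((kx : ℂ) + (ky : ℂ) * Complex.I) else ((γ : ℝ) : ℂ))
    else 0
/-- `δ_k`: equals `k` when `m` is even and `k + 1/2` when `m` is odd. -/
noncomputable def deltaIdx (m k : ℕ) : ℝ :=
  if Even m then (k : ℝ) else (k : ℝ) + 1 / 2

noncomputable def Nmat (γ : ℝ) (b : ℕ → ℂ) (n : ℕ) : Matrix (Fin n) (Fin n) ℂ :=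
  Matrix.of fun i j =>
    if (i : ℕ) = (j : ℕ) then b i
    else if (i : ℕ) + 1 = (j : ℕ) ∧ (i : ℕ) % 2 = 0 then ((γ : ℝ) : ℂ)
    else if (j : ℕ) + 1 = (i : ℕ) ∧ (j : ℕ) % 2 = 0 then ((γ : ℝ) : ℂ)
    else 0

lemma Nmat_step (γ : ℝ) (b : ℕ → ℂ) (n : ℕ) :
    (Nmat γ b (2 + n)).det
      = (b 0 * b 1 - (γ : ℂ) * (γ : ℂ)) * (Nmat γ (fun i => b (i + 2)) n).det := by
  have h : Nmat γ b (2 + n) =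
      (Matrix.fromBlocks !![b 0, ((γ:ℝ):ℂ); ((γ:ℝ):ℂ), b 1] 0 0
        (Nmat γ (fun i => b (i + 2)) n)).submatrix
        finSumFinEquiv.symm finSumFinEquiv.symm := by
    ext i j
    obtain ⟨x, rfl⟩ := finSumFinEquiv.surjective i
    obtain ⟨y, rfl⟩ := finSumFinEquiv.surjective j
    simp only [Matrix.submatrix_apply, Equiv.symm_apply_apply]
    cases x with
    | inl a =>
      cases y with
      | inl c =>
        fin_cases a <;> fin_cases c <;>
          simp [Nmat, Matrix.fromBlocks, finSumFinEquiv]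
      | inr c =>
        fin_cases a <;>
          (simp only [Nmat, Matrix.fromBlocks, finSumFinEquiv_apply_left,
            finSumFinEquiv_apply_right, Fin.coe_castAdd, Fin.coe_natAdd,
            Matrix.of_apply, Sum.elim_inl, Sum.elim_inr, Matrix.zero_apply] <;>
           split_ifs <;> simp_all <;> omega)
    | inr a =>
      cases y with
      | inl c =>
        fin_cases c <;>
          (simp only [Nmat, Matrix.fromBlocks, finSumFinEquiv_apply_left,
            finSumFinEquiv_apply_right, Fin.coe_castAdd, Fin.coe_natAdd,
            Matrix.of_apply, Sum.elim_inl, Sum.elim_inr, Matrix.zero_apply] <;>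
           split_ifs <;> simp_all <;> omega)
      | inr c =>
        simp only [Nmat, Matrix.fromBlocks, finSumFinEquiv_apply_left,
          finSumFinEquiv_apply_right, Fin.coe_castAdd, Fin.coe_natAdd,
          Matrix.of_apply, Sum.elim_inl, Sum.elim_inr, Matrix.zero_apply]
        have h1 : 2 + (a:ℕ) = 2 + (c:ℕ) ↔ (a:ℕ) = (c:ℕ) := by omega
        have h2 : 2 + (a:ℕ) + 1 = 2 + (c:ℕ) ↔ (a:ℕ) + 1 = (c:ℕ) := by omega
        have h3 : 2 + (c:ℕ) + 1 = 2 + (a:ℕ) ↔ (c:ℕ) + 1 = (a:ℕ) := by omega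
        have h4 : (2 + (a:ℕ)) % 2 = (a:ℕ) % 2 := by omega
        have h5 : (2 + (c:ℕ)) % 2 = (c:ℕ) % 2 := by omega
        simp only [h1, h2, h3, h4, h5]
        split_ifs <;> first | rfl | omega | (congr 1; omega) | simp_all | omega
  rw [h, Matrix.det_submatrix_equiv_self, Matrix.det_fromBlocks_zero₂₁,
    Matrix.det_fin_two_of]

lemma Nmat_det (γ : ℝ) : ∀ (k : ℕ) (b : ℕ → ℂ),
    (Nmat γ b (2 * k + 1)).det
      = (∏ t ∈ Finset.range k, (b (2 * t) * b (2 * t + 1) - (γ : ℂ) * (γ : ℂ)))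
          * b (2 * k) := by
  intro k
  induction k with
  | zero =>
    intro b
    simp [Nmat, Matrix.det_fin_one]
  | succ k ih =>
    intro b
    rw [show 2 * (k + 1) + 1 = 2 + (2 * k + 1) from by ring]
    rw [Nmat_step, ih]
    rw [Finset.prod_range_succ']
    have h1 : ∀ t : ℕ, b (2 * t + 2) = b (2 * (t + 1)) := fun t => by ring_nf
    have h2 : ∀ t : ℕ, b (2 * t + 1 + 2) = b (2 * (t + 1) + 1) := fun t => by ring_nf
    have h3 : b (2 * k + 2) = b (2 * (k + 1)) := by ring_nf
    simp only [h1, h2, h3]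
    ring

lemma Hbulk_det (m : ℕ) (hm : 1 ≤ m) (γ u : ℝ) :
    (Hbulk m γ u 0 0).det
      = ((layerPot m u 1 : ℝ) : ℂ) *
        (Nmat γ (fun i => ((layerPot m u ((i + 1) / 2 + 1) : ℝ) : ℂ)) (2 * m - 1)).det := by
  set b : ℕ → ℂ := fun i => ((layerPot m u ((i + 1) / 2 + 1) : ℝ) : ℂ) with hb
  have hmm : 1 + (2 * m - 1) = 2 * m := by omega
  set e : Fin 1 ⊕ Fin (2 * m - 1) ≃ Fin (2 * m) :=
    finSumFinEquiv.trans (finCongr hmm) with he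
  have key : Hbulk m γ u 0 0 =
      (Matrix.fromBlocks !![((layerPot m u 1 : ℝ) : ℂ)] 0 0 (Nmat γ b (2 * m - 1))).submatrix
        e.symm e.symm := by
    ext i j
    obtain ⟨x, rfl⟩ := e.surjective i
    obtain ⟨y, rfl⟩ := e.surjective j
    simp only [Matrix.submatrix_apply, Equiv.symm_apply_apply]
    have coeL : ∀ a : Fin 1, ((e (Sum.inl a) : ℕ)) = 0 := by
      intro a; simp [he, finCongr_apply, Fin.coe_cast]
    have coeR : ∀ a : Fin (2 * m - 1), ((e (Sum.inr a) : ℕ)) = 1 + a := by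
      intro a; simp [he, finCongr_apply, Fin.coe_cast]
    cases x with
    | inl a =>
      cases y with
      | inl c =>
        fin_cases a; fin_cases c
        simp [Hbulk, Matrix.fromBlocks, coeL, he]
      | inr c =>
        simp only [Hbulk, Matrix.fromBlocks, Matrix.of_apply, Sum.elim_inl, Sum.elim_inr,
          Matrix.zero_apply, coeL, coeR]
        split_ifs <;> simp_all <;> omega
    | inr a =>
      cases y with
      | inl c =>
        simp only [Hbulk, Matrix.fromBlocks, Matrix.of_apply, Sum.elim_inl, Sum.elim_inr,
          Matrix.zero_apply, coeL, coeR]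
        split_ifs <;> simp_all <;> omega
      | inr c =>
        simp only [Hbulk, Nmat, Matrix.fromBlocks, Matrix.of_apply, Sum.elim_inl, Sum.elim_inr,
          Matrix.zero_apply, coeL, coeR, hb]
        have h1 : 1 + (a:ℕ) = 1 + (c:ℕ) ↔ (a:ℕ) = (c:ℕ) := by omega
        have h2 : 1 + (a:ℕ) + 1 = 1 + (c:ℕ) ↔ (a:ℕ) + 1 = (c:ℕ) := by omega
        have h3 : 1 + (c:ℕ) + 1 = 1 + (a:ℕ) ↔ (c:ℕ) + 1 = (a:ℕ) := by omega
        have h4 : (1 + (a:ℕ)) / 2 = ((a:ℕ) + 1) / 2 := by omega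
        simp only [h1, h2, h3, h4]
        by_cases hac : (a:ℕ) = (c:ℕ)
        · simp [hac]
        · simp only [if_neg hac]
          by_cases hac2 : (a:ℕ) + 1 = (c:ℕ)
          · have : (1 + (a:ℕ)) % 2 = 0 ↔ ¬ ((a:ℕ) % 2 = 0) := by omega
            simp only [if_pos hac2, hac2]
            split_ifs <;> simp_all <;> omega
          · simp only [if_neg hac2]
            by_cases hac3 : (c:ℕ) + 1 = (a:ℕ)
            · simp only [if_pos hac3]
              split_ifs <;> simp_all <;> omega
            · simp [hac2, hac3]
  rw [key, Matrix.det_submatrix_equiv_self, Matrix.det_fromBlocks_zero₂₁,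
    Matrix.det_fin_one_of]

lemma Hbulk_det_real (m : ℕ) (hm : 2 ≤ m) (γ u : ℝ) :
    (Hbulk m γ u 0 0).det =
      ((((layerPot m u 1 * layerPot m u m) *
        ∏ t ∈ Finset.range (m - 1),
          (layerPot m u (t + 1) * layerPot m u (t + 2) - γ * γ) : ℝ)) : ℂ) := by
  rw [Hbulk_det m (by omega), show 2 * m - 1 = 2 * (m - 1) + 1 from by omega, Nmat_det]
  have harg1 : ∀ t : ℕ, (2 * t + 1) / 2 + 1 = t + 1 := by omega
  have harg2 : ∀ t : ℕ, (2 * t + 1 + 1) / 2 + 1 = t + 2 := by omega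
  have harg3 : (2 * (m - 1) + 1) / 2 + 1 = m := by omega
  have harg4 : m - 1 + 1 = m := by omega
  simp only [harg1, harg2, harg3, harg4]
  push_cast
  ring

lemma layerPot_one (m : ℕ) (hm : 2 ≤ m) (u : ℝ) : layerPot m u 1 = -u / 2 := by
  have hc : ((m : ℝ) - 1) ≠ 0 := by
    have : (2 : ℝ) ≤ (m : ℝ) := by exact_mod_cast hm
    linarith
  unfold layerPot
  field_simp
  ring

lemma layerPot_m (m : ℕ) (hm : 2 ≤ m) (u : ℝ) : layerPot m u m = u / 2 := by
  have hc : ((m : ℝ) - 1) ≠ 0 := by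
    have : (2 : ℝ) ≤ (m : ℝ) := by exact_mod_cast hm
    linarith
  unfold layerPot
  field_simp
  ring

lemma factor_eq (m : ℕ) (u : ℝ) (j : ℕ) :
    layerPot m u j * layerPot m u (j + 1)
      = (u / ((m : ℝ) - 1)) ^ 2 * (((j : ℝ) - (m : ℝ) / 2) ^ 2 - 1 / 4) := by
  unfold layerPot
  push_cast
  ring

lemma final_u (m : ℕ) (γ u δ : ℝ) (hγ : 0 < γ) (hc : 0 < (m : ℝ) - 1) (hu : 0 < u)
    (hEq : (u / ((m : ℝ) - 1)) ^ 2 * (δ ^ 2 - 1 / 4) = γ * γ) :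
    u = γ * ((m : ℝ) - 1) / Real.sqrt (δ ^ 2 - 1 / 4) := by
  set X := δ ^ 2 - 1 / 4 with hXdef
  have h1 : 0 < (u / ((m : ℝ) - 1)) ^ 2 := by positivity
  have hX : 0 < X := by
    by_contra h
    push_neg at h
    have h2 : (u / ((m : ℝ) - 1)) ^ 2 * X ≤ 0 :=
      mul_nonpos_of_nonneg_of_nonpos h1.le h
    nlinarith [mul_pos hγ hγ]
  have hs : 0 < Real.sqrt X := Real.sqrt_pos.mpr hX
  rw [eq_div_iff (ne_of_gt hs)]
  have hEq' : u ^ 2 * X = γ ^ 2 * ((m : ℝ) - 1) ^ 2 := by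
    field_simp at hEq
    nlinarith [hEq]
  have hsq : (u * Real.sqrt X) ^ 2 = (γ * ((m : ℝ) - 1)) ^ 2 := by
    rw [mul_pow, Real.sq_sqrt hX.le]
    nlinarith [hEq']
  have hz : (u * Real.sqrt X - γ * ((m : ℝ) - 1)) * (u * Real.sqrt X + γ * ((m : ℝ) - 1)) = 0 := by
    nlinarith [hsq]
  rcases mul_eq_zero.mp hz with h | h
  · linarith
  · exfalso
    have : 0 < u * Real.sqrt X := mul_pos hu hs
    nlinarith [mul_pos hγ hc]

lemma crit_iff (m : ℕ) (hm : 2 ≤ m) (γ : ℝ) (hγ : 0 < γ) (u : ℝ) :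
    (0 < u ∧ (Hbulk m γ u 0 0).det = 0) ↔
      ∃ k : ℕ, 1 ≤ k ∧ k ≤ m / 2 - 1 ∧
        u = γ * ((m : ℝ) - 1) / Real.sqrt ((deltaIdx m k) ^ 2 - 1 / 4) := by
  have hc : (0 : ℝ) < (m : ℝ) - 1 := by
    have : (2 : ℝ) ≤ (m : ℝ) := by exact_mod_cast hm
    linarith
  have hc0 : ((m : ℝ) - 1) ≠ 0 := ne_of_gt hc
  constructor
  · rintro ⟨hu, hdet⟩
    rw [Hbulk_det_real m hm, Complex.ofReal_eq_zero] at hdet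
    have hhead : layerPot m u 1 * layerPot m u m ≠ 0 := by
      rw [layerPot_one m hm, layerPot_m m hm]
      intro h
      have : u * u = 0 := by nlinarith [h]
      rcases mul_eq_zero.mp this with h | h <;> linarith
    have hprod : (∏ t ∈ Finset.range (m - 1),
        (layerPot m u (t + 1) * layerPot m u (t + 2) - γ * γ)) = 0 := by
      rcases mul_eq_zero.mp hdet with h | h
      · exact absurd h hhead
      · exact h
    obtain ⟨t, ht, hfac⟩ := Finset.prod_eq_zero_iff.mp hprod
    rw [Finset.mem_range] at ht
    set j := t + 1 with hj
    have hj1 : 1 ≤ j := by omega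
    have hjm : j ≤ m - 1 := by omega
    have hEq : (u / ((m : ℝ) - 1)) ^ 2 * (((j : ℝ) - (m : ℝ) / 2) ^ 2 - 1 / 4) = γ * γ := by
      have := sub_eq_zero.mp hfac
      rw [show t + 2 = j + 1 from by omega] at this
      rw [← factor_eq]
      exact this
    set d : ℕ := if m ≤ 2 * j then 2 * j - m else m - 2 * j with hd
    have hd2 : ((j : ℝ) - (m : ℝ) / 2) ^ 2 = ((d : ℝ) / 2) ^ 2 := by
      by_cases h : m ≤ 2 * j
      · have hdv : (d : ℝ) = 2 * (j : ℝ) - (m : ℝ) := by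
          rw [hd, if_pos h]
          push_cast [h]
          ring
        rw [hdv]; ring
      · have hdv : (d : ℝ) = (m : ℝ) - 2 * (j : ℝ) := by
          rw [hd, if_neg h]
          push_cast [le_of_not_ge h]
          ring
        rw [hdv]; ring
    have hdle : d ≤ m - 2 := by rw [hd]; split <;> omega
    have hdpar : d % 2 = m % 2 := by rw [hd]; split <;> omega
    have hd2le : 2 ≤ d := by
      by_contra hlt
      push_neg at hlt
      have hdr : (d : ℝ) ≤ 1 := by exact_mod_cast Nat.lt_succ_iff.mp hlt
      have hdr0 : (0 : ℝ) ≤ (d : ℝ) := Nat.cast_nonneg d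
      have h1 : 0 < (u / ((m : ℝ) - 1)) ^ 2 := by positivity
      rw [hd2] at hEq
      have hle : ((d : ℝ) / 2) ^ 2 - 1 / 4 ≤ 0 := by nlinarith
      have h2 : (u / ((m : ℝ) - 1)) ^ 2 * (((d : ℝ) / 2) ^ 2 - 1 / 4) ≤ 0 :=
        mul_nonpos_of_nonneg_of_nonpos h1.le hle
      nlinarith [mul_pos hγ hγ]
    by_cases hev : Even m
    · have hm2 : m % 2 = 0 := Nat.even_iff.mp hev
      refine ⟨d / 2, by omega, by omega, ?_⟩
      have hδ : deltaIdx m (d / 2) = (d : ℝ) / 2 := by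
        rw [deltaIdx, if_pos hev]
        have h2d : 2 * (d / 2) = d := by omega
        have := congrArg (fun n : ℕ => (n : ℝ)) h2d
        push_cast at this
        linarith
      rw [hδ]
      apply final_u m γ u ((d : ℝ) / 2) hγ hc hu
      rw [← hd2]
      exact hEq
    · have hm2 : m % 2 = 1 := Nat.odd_iff.mp (Nat.not_even_iff_odd.mp hev)
      refine ⟨(d - 1) / 2, by omega, by omega, ?_⟩
      have hδ : deltaIdx m ((d - 1) / 2) = (d : ℝ) / 2 := by
        rw [deltaIdx, if_neg hev]
        have h2d : 2 * ((d - 1) / 2) + 1 = d := by omega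
        have := congrArg (fun n : ℕ => (n : ℝ)) h2d
        push_cast at this
        linarith
      rw [hδ]
      apply final_u m γ u ((d : ℝ) / 2) hγ hc hu
      rw [← hd2]
      exact hEq
  · rintro ⟨k, hk1, hk2, hku⟩
    have hδ1 : 1 ≤ deltaIdx m k := by
      rw [deltaIdx]
      split
      · exact_mod_cast hk1
      · have : (1 : ℝ) ≤ (k : ℝ) := by exact_mod_cast hk1
        linarith
    set X := (deltaIdx m k) ^ 2 - 1 / 4 with hXdef
    have hδsq : 1 ≤ deltaIdx m k ^ 2 := by nlinarith
    have hX : 0 < X := by rw [hXdef]; linarith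
    have hs : 0 < Real.sqrt X := Real.sqrt_pos.mpr hX
    have hu : 0 < u := by
      rw [hku]
      exact div_pos (mul_pos hγ hc) hs
    refine ⟨hu, ?_⟩
    rw [Hbulk_det_real m hm, Complex.ofReal_eq_zero]
    -- choose layer index j
    set j : ℕ := if Even m then m / 2 + k else (m + 1) / 2 + k with hj
    have hδj : (j : ℝ) - (m : ℝ) / 2 = deltaIdx m k := by
      by_cases hev : Even m
      · have hm2 : m % 2 = 0 := Nat.even_iff.mp hev
        have h2d : 2 * (m / 2) = m := by omega
        have hcast := congrArg (fun n : ℕ => (n : ℝ)) h2d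
        push_cast at hcast
        rw [hj, if_pos hev, deltaIdx, if_pos hev]
        push_cast
        linarith
      · have hm2 : m % 2 = 1 := Nat.odd_iff.mp (Nat.not_even_iff_odd.mp hev)
        have h2d : 2 * ((m + 1) / 2) = m + 1 := by omega
        have hcast := congrArg (fun n : ℕ => (n : ℝ)) h2d
        push_cast at hcast
        rw [hj, if_neg hev, deltaIdx, if_neg hev]
        push_cast
        linarith
    have hjm : 1 ≤ j ∧ j ≤ m - 1 := by
      rw [hj]
      split
      · have hm2 : m % 2 = 0 := Nat.even_iff.mp (by assumption)
        omega
      · have hm2 : m % 2 = 1 := Nat.odd_iff.mp (Nat.not_even_iff_odd.mp (by assumption))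
        omega
    apply mul_eq_zero_of_right
    apply Finset.prod_eq_zero (Finset.mem_range.mpr (show j - 1 < m - 1 from by omega))
    rw [show j - 1 + 1 = j from by omega, show j - 1 + 2 = j + 1 from by omega]
    rw [sub_eq_zero, factor_eq, hδj]
    rw [hku]
    have h1 : γ * ((m : ℝ) - 1) / Real.sqrt X / ((m : ℝ) - 1) = γ / Real.sqrt X := by
      field_simp
    rw [h1, div_pow, Real.sq_sqrt hX.le, ← hXdef]
    field_simp

/-- for `γ > 0`, the set of critical potentials
`{u > 0 : Ĥ(0; γ, u) singular}` equals `{γ(m−1)/√(δ_k² − 1/4) : 1 ≤ k ≤ ⌊m/2⌋ − 1}`;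
it has exactly `⌊m/2⌋ − 1` elements, and is empty for `m = 2, 3`, in which case
`Ĥ(0; γ, u)` is invertible for every `u > 0`. -/
theorem critical_potentials (m : ℕ) (hm : 2 ≤ m) (γ : ℝ) (hγ : 0 < γ) :
    {u : ℝ | 0 < u ∧ (Hbulk m γ u 0 0).det = 0} =
      {x : ℝ | ∃ k : ℕ, 1 ≤ k ∧ k ≤ m / 2 - 1 ∧
        x = γ * ((m : ℝ) - 1) / Real.sqrt ((deltaIdx m k) ^ 2 - 1 / 4)} ∧
    Set.ncard {u : ℝ | 0 < u ∧ (Hbulk m γ u 0 0).det = 0} = m / 2 - 1 ∧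
    ((m = 2 ∨ m = 3) → ∀ u : ℝ, 0 < u → (Hbulk m γ u 0 0).det ≠ 0) := by
  have hc : (0 : ℝ) < (m : ℝ) - 1 := by
    have : (2 : ℝ) ≤ (m : ℝ) := by exact_mod_cast hm
    linarith
  set f : ℕ → ℝ := fun k => γ * ((m : ℝ) - 1) / Real.sqrt ((deltaIdx m k) ^ 2 - 1 / 4)
    with hf
  have hset : {u : ℝ | 0 < u ∧ (Hbulk m γ u 0 0).det = 0} =
      {x : ℝ | ∃ k : ℕ, 1 ≤ k ∧ k ≤ m / 2 - 1 ∧ x = f k} := by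
    ext u
    simp only [Set.mem_setOf_eq]
    exact crit_iff m hm γ hγ u
  -- facts about δ for k ≥ 1
  have hδ1 : ∀ k : ℕ, 1 ≤ k → 1 ≤ deltaIdx m k := by
    intro k hk
    rw [deltaIdx]
    split
    · exact_mod_cast hk
    · have : (1 : ℝ) ≤ (k : ℝ) := by exact_mod_cast hk
      linarith
  have hXpos : ∀ k : ℕ, 1 ≤ k → 0 < (deltaIdx m k) ^ 2 - 1 / 4 := by
    intro k hk
    have h1 := hδ1 k hk
    nlinarith
  have hinj : Set.InjOn f ↑(Finset.Icc 1 (m / 2 - 1)) := by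
    intro k1 hk1 k2 hk2 h
    simp only [Finset.coe_Icc, Set.mem_Icc] at hk1 hk2
    have hX1 := hXpos k1 hk1.1
    have hX2 := hXpos k2 hk2.1
    have hs1 : 0 < Real.sqrt ((deltaIdx m k1) ^ 2 - 1 / 4) := Real.sqrt_pos.mpr hX1
    have hs2 : 0 < Real.sqrt ((deltaIdx m k2) ^ 2 - 1 / 4) := Real.sqrt_pos.mpr hX2
    have hA : 0 < γ * ((m : ℝ) - 1) := mul_pos hγ hc
    rw [hf] at h
    simp only [div_eq_div_iff (ne_of_gt hs1) (ne_of_gt hs2)] at h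
    have hss : Real.sqrt ((deltaIdx m k1) ^ 2 - 1 / 4)
        = Real.sqrt ((deltaIdx m k2) ^ 2 - 1 / 4) := by
      have := mul_left_cancel₀ (ne_of_gt hA) h
      linarith
    have hXX : (deltaIdx m k1) ^ 2 - 1 / 4 = (deltaIdx m k2) ^ 2 - 1 / 4 := by
      have e1 := Real.sq_sqrt hX1.le
      have e2 := Real.sq_sqrt hX2.le
      rw [hss] at e1
      linarith
    have hδsq : (deltaIdx m k1) ^ 2 = (deltaIdx m k2) ^ 2 := by linarith
    have hδeq : deltaIdx m k1 = deltaIdx m k2 := by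
      have hfct : (deltaIdx m k1 - deltaIdx m k2) * (deltaIdx m k1 + deltaIdx m k2) = 0 := by
        linear_combination hδsq
      rcases mul_eq_zero.mp hfct with h' | h'
      · linarith
      · have := hδ1 k1 hk1.1
        have := hδ1 k2 hk2.1
        linarith
    rw [deltaIdx, deltaIdx] at hδeq
    split_ifs at hδeq
    · exact_mod_cast hδeq
    · have : (k1 : ℝ) = (k2 : ℝ) := by linarith
      exact_mod_cast this
  refine ⟨hset, ?_, ?_⟩
  · rw [hset]
    have hTset : {x : ℝ | ∃ k : ℕ, 1 ≤ k ∧ k ≤ m / 2 - 1 ∧ x = f k}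
        = ↑((Finset.Icc 1 (m / 2 - 1)).image f) := by
      ext x
      simp only [Set.mem_setOf_eq, Finset.coe_image, Set.mem_image, Finset.mem_coe,
        Finset.mem_Icc]
      constructor
      · rintro ⟨k, h1, h2, h3⟩
        exact ⟨k, ⟨h1, h2⟩, h3.symm⟩
      · rintro ⟨k, ⟨h1, h2⟩, h3⟩
        exact ⟨k, h1, h2, h3.symm⟩
    rw [hTset, Set.ncard_coe_finset, Finset.card_image_of_injOn hinj, Nat.card_Icc]
    omega
  · intro h23 u hu hdet
    obtain ⟨k, hk1, hk2, -⟩ := (crit_iff m hm γ hγ u).mp ⟨hu, hdet⟩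
    rcases h23 with h | h <;> omega
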